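/- arXiv:math/0408110 — 2 statements merged into one kernel-verified Lean document; each statement's English description precedes it below -/
import Mathlib

section
/- Let R₁,…,Rₙ be ℕ-graded polynomial rings over a field K of dimensions d₁,…,dₙ ≥ 2 and consider shifts s₁ ≤ s₂ ≤ … ≤ sₙ with all dᵢ = d equal. Define the combinatorial Cohen-Macaulay criterion: for all nonempty proper subsets I ⊂ {1,…,n}, min{sᵢ - d : i ∈ I} < max{sⱼ : j ∉ I}. Then this criterion holds if and only if s_{i+1} < sᵢ + d for i = 1,…,n-1. -/
/-- Boundary lemma: a property true at `a` and false at `b > a` flips somewhere in between. -/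
lemma nat_boundary (p : ℕ → Prop) :
    ∀ b a, a < b → p a → ¬ p b → ∃ k, a ≤ k ∧ k + 1 ≤ b ∧ p k ∧ ¬ p (k + 1) := by
  intro b
  induction b with
  | zero => intro a h; omega
  | succ b ih =>
    intro a hab hpa hpb
    by_cases h : p b
    · exact ⟨b, by omega, by omega, h, hpb⟩
    · rcases Nat.lt_or_ge a b with h' | h'
      · obtain ⟨k, h1, h2, h3, h4⟩ := ih a h' hpa h
        exact ⟨k, h1, by omega, h3, h4⟩
      · have : a = b := by omega
        exact absurd (this ▸ hpa) h

/-- For sorted shifts `s₁ ≤ … ≤ sₙ` and equal dimensions `dᵢ = d ≥ 2`, the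
Segre Cohen–Macaulay criterion — for every nonempty proper `I ⊂ {1,…,n}`,
`min{sᵢ - d : i ∈ I} < max{sⱼ : j ∉ I}` — holds iff `s_{i+1} < sᵢ + d` for all `i`.
(The min/max inequality is expressed equivalently as the existence of `i ∈ I`, `j ∉ I`
with `sᵢ - d < sⱼ`.) -/
theorem segre_CM_criterion_iff_chain (n : ℕ) (d : ℤ) (hd : 2 ≤ d)
    (s : Fin n → ℤ) (hmono : Monotone s) :
    (∀ I : Finset (Fin n), I.Nonempty → I ≠ Finset.univ →
        ∃ i ∈ I, ∃ j ∈ Iᶜ, s i - d < s j) ↔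
      (∀ i j : Fin n, (j : ℕ) = (i : ℕ) + 1 → s j < s i + d) := by
  constructor
  · intro H i j hji
    set I : Finset (Fin n) := Finset.univ.filter (fun k => i.val + 1 ≤ k.val) with hI
    have hjI : j ∈ I := by simp [hI]; omega
    have hiI : i ∉ I := by simp [hI]
    obtain ⟨i', hi', j', hj', hlt⟩ := H I ⟨j, hjI⟩
      (by intro h; exact hiI (h ▸ Finset.mem_univ i))
    have h1 : j ≤ i' := by
      have : i.val + 1 ≤ i'.val := by
        have := hi'; simp [hI] at this; exact this
      rw [Fin.le_def]; omega
    have h2 : j' ≤ i := by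
      have : ¬ (i.val + 1 ≤ j'.val) := by
        have := hj'; simp [hI] at this; omega
      rw [Fin.le_def]; omega
    have := hmono h1
    have := hmono h2
    linarith
  · intro H I hne hproper
    obtain ⟨a, ha⟩ := hne
    obtain ⟨b, hb⟩ := (Finset.compl_ne_univ_iff_nonempty Iᶜ).mp (by simpa using hproper)
    have hbI : b ∉ I := Finset.mem_compl.mp hb
    have hab : a.val ≠ b.val := by
      intro h
      exact hbI (by rwa [show b = a from Fin.ext h.symm])
    rcases Nat.lt_or_ge a.val b.val with h | h
    · -- a ∈ I, b ∉ I, a < b : find k ∈ I, k+1 ∉ I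
      obtain ⟨k, hk1, hk2, hk3, hk4⟩ := nat_boundary
        (fun t => ∃ h : t < n, (⟨t, h⟩ : Fin n) ∈ I) b.val a.val h
        ⟨a.isLt, by simpa using ha⟩
        (by rintro ⟨h', hmem⟩; exact hbI (by simpa using hmem))
      have hkn : k + 1 < n := lt_of_le_of_lt hk2 b.isLt
      obtain ⟨hk, hkI⟩ := hk3
      refine ⟨⟨k, hk⟩, hkI, ⟨k + 1, hkn⟩, Finset.mem_compl.mpr ?_, ?_⟩
      · intro hc; exact hk4 ⟨hkn, hc⟩
      · have hle : (⟨k, hk⟩ : Fin n) ≤ ⟨k + 1, hkn⟩ := by simp [Fin.le_def]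
        have := hmono hle
        linarith
    · -- b ∉ I, a ∈ I, b < a : find k ∉ I, k+1 ∈ I
      have h' : b.val < a.val := by omega
      obtain ⟨k, hk1, hk2, hk3, hk4⟩ := nat_boundary
        (fun t => ∃ h : t < n, (⟨t, h⟩ : Fin n) ∉ I) a.val b.val h'
        ⟨b.isLt, by simpa using hbI⟩
        (by rintro ⟨h'', hmem⟩; exact hmem (by simpa using ha))
      have hkn : k + 1 < n := lt_of_le_of_lt hk2 a.isLt
      obtain ⟨hk, hkI⟩ := hk3
      have hmem : (⟨k + 1, hkn⟩ : Fin n) ∈ I := by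
        by_contra hc; exact hk4 ⟨hkn, hc⟩
      refine ⟨⟨k + 1, hkn⟩, hmem, ⟨k, hk⟩, Finset.mem_compl.mpr hkI, ?_⟩
      have := H ⟨k, hk⟩ ⟨k + 1, hkn⟩ rfl
      linarith
end

section
/- Let b₁ ≤ b₂ ≤ … ≤ bₙ and h₁,…,hₙ be integers with hᵢ < bᵢ for all i (hᵢ = bᵢ - dᵢ, dᵢ ≥ 1). Suppose for every nonempty proper subset I ⊂ {1,…,n}: min{hᵢ : i ∈ I} < max{bⱼ : j ∉ I}. Then there exists a permutation j₁,…,jₙ of 1,…,n such that for each t = 1,…,n-1: min{h_{jᵢ} : 1 ≤ i ≤ t} < b_{j_{t+1}} and max{b_{jᵢ} : 1 ≤ i ≤ t} > h_{j_{t+1}}. -/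
/-- Given integers `b₁ ≤ … ≤ bₙ` and `h₁,…,hₙ` with `hᵢ < bᵢ`, if for every
nonempty proper subset `I` one has `min{hᵢ : i ∈ I} < max{bⱼ : j ∉ I}`, then there is a
permutation `j₁,…,jₙ` such that for each `t = 1,…,n-1`:
`min{h_{jᵢ} : i ≤ t} < b_{j_{t+1}}` and `max{b_{jᵢ} : i ≤ t} > h_{j_{t+1}}`
(the min/max conditions being expressed as existentials). -/
theorem segre_CM_permutation_exists (n : ℕ) (b h : Fin n → ℤ)
    (hmono : Monotone b) (hlt : ∀ i, h i < b i)
    (hsubset : ∀ I : Finset (Fin n), I.Nonempty → I ≠ Finset.univ →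
      ∃ i ∈ I, ∃ j ∈ Iᶜ, h i < b j) :
    ∃ e : Equiv.Perm (Fin n), ∀ (t : ℕ) (ht : t + 1 < n),
      (∃ i : Fin n, (i : ℕ) ≤ t ∧ h (e i) < b (e ⟨t + 1, ht⟩)) ∧
      (∃ i : Fin n, (i : ℕ) ≤ t ∧ h (e ⟨t + 1, ht⟩) < b (e i)) := by
  refine ⟨Fin.revPerm, fun t ht => ?_⟩
  have hn : 0 < n := Nat.lt_of_le_of_lt (Nat.zero_le _) ht
  constructor
  · -- min condition via subset hypothesis
    set I : Finset (Fin n) := Finset.univ.filter (fun i => (Fin.rev i : ℕ) ≤ t) with hI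
    have hne : I.Nonempty := by
      refine ⟨Fin.rev ⟨0, hn⟩, ?_⟩
      simp only [hI, Finset.mem_filter, Finset.mem_univ, true_and, Fin.rev_rev]
      exact Nat.zero_le _
    have hnuniv : I ≠ Finset.univ := by
      intro hcontra
      have h0 : (⟨0, hn⟩ : Fin n) ∈ I := hcontra ▸ Finset.mem_univ _
      simp only [hI, Finset.mem_filter, Fin.val_rev] at h0
      omega
    obtain ⟨i, hiI, j, hjI, hij⟩ := hsubset I hne hnuniv
    simp only [hI, Finset.mem_filter, Finset.mem_univ, true_and] at hiI
    simp only [hI, Finset.mem_compl, Finset.mem_filter, Finset.mem_univ, true_and,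
      not_le] at hjI
    refine ⟨Fin.rev i, hiI, ?_⟩
    simp only [Equiv.Perm.coe_mul, Fin.revPerm_apply, Fin.rev_rev]
    refine lt_of_lt_of_le hij (hmono ?_)
    -- j ≤ rev ⟨t+1, ht⟩ since rev j ≥ t+1
    have : (⟨t + 1, ht⟩ : Fin n) ≤ Fin.rev j := hjI
    have := Fin.rev_le_rev.mpr this
    rwa [Fin.rev_rev] at this
  · refine ⟨⟨0, hn⟩, Nat.zero_le _, ?_⟩
    refine lt_of_lt_of_le (hlt _) (hmono ?_)
    exact Fin.rev_le_rev.mpr (Fin.mk_le_mk.mpr (Nat.zero_le _))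
end
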